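/- Given a discrete semi-coupling (A,B) with weight matrix Ω, there exists a modified discrete semi-coupling (Ã, B̃) of the same marginals such that Ã_{ij} = B̃_{ij} = 0 whenever Ω_{ij} ≤ 0, and F(A,B) ≤ F(Ã,B̃), where F(A,B) = Σ_{i=1}^m Σ_{j=1}^n √(A_{ij}B_{ij}) Ω_{ij}. Consequently the supremum of F over all discrete semi-couplings equals the supremum over those supported on {(i,j) : Ω_{ij} > 0}. -/
import Mathlib

open scoped BigOperators

def IsSemiCoupling {m n : ℕ} (a : Fin m → ℝ) (b : Fin n → ℝ)
    (A B : Fin (m + 1) → Fin (n + 1) → ℝ) : Prop :=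
  (∀ i j, 0 ≤ A i j) ∧ (∀ i j, 0 ≤ B i j) ∧
  (∀ i : Fin m, a i = ∑ j, A i.succ j) ∧
  (∀ j, A 0 j = 0) ∧
  (∀ j : Fin n, b j = ∑ i, B i j.succ) ∧
  (∀ i, B i 0 = 0)

noncomputable def F {m n : ℕ} (Ω : Fin m → Fin n → ℝ)
    (A B : Fin (m + 1) → Fin (n + 1) → ℝ) : ℝ :=
  ∑ i : Fin m, ∑ j : Fin n, Real.sqrt (A i.succ j.succ * B i.succ j.succ) * Ω i j

noncomputable def modA {m n : ℕ} (Ω : Fin m → Fin n → ℝ)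
    (A : Fin (m+1) → Fin (n+1) → ℝ) : Fin (m+1) → Fin (n+1) → ℝ :=
  fun i => Fin.cases (fun _ => (0:ℝ))
    (fun i' => Fin.cases
      (A i'.succ 0 + ∑ j' : Fin n, if 0 < Ω i' j' then (0:ℝ) else A i'.succ j'.succ)
      (fun j' => if 0 < Ω i' j' then A i'.succ j'.succ else 0)) i

noncomputable def modB {m n : ℕ} (Ω : Fin m → Fin n → ℝ)
    (B : Fin (m+1) → Fin (n+1) → ℝ) : Fin (m+1) → Fin (n+1) → ℝ :=
  fun i j => Fin.cases (0:ℝ)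
    (fun j' => Fin.cases
      (B 0 j'.succ + ∑ i' : Fin m, if 0 < Ω i' j' then (0:ℝ) else B i'.succ j'.succ)
      (fun i' => if 0 < Ω i' j' then B i'.succ j'.succ else 0) i) j

lemma mod_is_sc {m n : ℕ} (a : Fin m → ℝ) (b : Fin n → ℝ)
    (Ω : Fin m → Fin n → ℝ) (A B : Fin (m+1) → Fin (n+1) → ℝ)
    (h : IsSemiCoupling a b A B) :
    IsSemiCoupling a b (modA Ω A) (modB Ω B) := by
  obtain ⟨hA0, hB0, hAm, hA00, hBm, hB00⟩ := h
  refine ⟨?_, ?_, ?_, ?_, ?_, ?_⟩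
  · intro i j
    induction i using Fin.cases with
    | zero => simp [modA]
    | succ i' =>
      induction j using Fin.cases with
      | zero =>
        simp only [modA, Fin.cases_succ, Fin.cases_zero]
        refine add_nonneg (hA0 _ _) (Finset.sum_nonneg fun j' _ => ?_)
        split <;> [exact le_refl 0; exact hA0 _ _]
      | succ j' =>
        simp only [modA, Fin.cases_succ]
        split <;> [exact hA0 _ _; exact le_refl 0]
  · intro i j
    induction j using Fin.cases with
    | zero => simp [modB]
    | succ j' =>
      induction i using Fin.cases with
      | zero =>
        simp only [modB, Fin.cases_succ, Fin.cases_zero]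
        refine add_nonneg (hB0 _ _) (Finset.sum_nonneg fun i' _ => ?_)
        split <;> [exact le_refl 0; exact hB0 _ _]
      | succ i' =>
        simp only [modB, Fin.cases_succ]
        split <;> [exact hB0 _ _; exact le_refl 0]
  · intro i
    rw [hAm i, Fin.sum_univ_succ, Fin.sum_univ_succ]
    simp only [modA, Fin.cases_succ, Fin.cases_zero]
    rw [add_assoc, ← Finset.sum_add_distrib]
    congr 1
    refine Finset.sum_congr rfl fun j' _ => ?_
    split_ifs <;> ring
  · intro j; simp [modA]
  · intro j
    rw [hBm j, Fin.sum_univ_succ, Fin.sum_univ_succ]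
    simp only [modB, Fin.cases_succ, Fin.cases_zero]
    rw [add_assoc, ← Finset.sum_add_distrib]
    congr 1
    refine Finset.sum_congr rfl fun i' _ => ?_
    split_ifs <;> ring
  · intro i; simp [modB]

lemma mod_support {m n : ℕ} (Ω : Fin m → Fin n → ℝ)
    (A B : Fin (m+1) → Fin (n+1) → ℝ) (i : Fin m) (j : Fin n) (h : Ω i j ≤ 0) :
    modA Ω A i.succ j.succ = 0 ∧ modB Ω B i.succ j.succ = 0 := by
  constructor
  · simp only [modA, Fin.cases_succ]
    rw [if_neg (not_lt.mpr h)]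
  · simp only [modB, Fin.cases_succ]
    rw [if_neg (not_lt.mpr h)]

lemma mod_F_le {m n : ℕ} (Ω : Fin m → Fin n → ℝ)
    (A B : Fin (m+1) → Fin (n+1) → ℝ) :
    F Ω A B ≤ F Ω (modA Ω A) (modB Ω B) := by
  refine Finset.sum_le_sum fun i _ => Finset.sum_le_sum fun j _ => ?_
  simp only [modA, modB, Fin.cases_succ]
  by_cases hpos : 0 < Ω i j
  · rw [if_pos hpos, if_pos hpos]
  · rw [if_neg hpos, if_neg hpos]
    simp only [mul_zero, Real.sqrt_zero, zero_mul]
    exact mul_nonpos_of_nonneg_of_nonpos (Real.sqrt_nonneg _) (not_lt.mp hpos)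

/-- Any discrete semi-coupling can be modified, keeping the marginals, so that it is
supported on `{(i,j) : Ωᵢⱼ > 0}` without decreasing `F`; consequently the supremum of
`F` over all discrete semi-couplings equals the supremum over such supported ones. -/
theorem stmt_11 (m n : ℕ) (a : Fin m → ℝ) (b : Fin n → ℝ)
    (ha : ∀ i, 0 ≤ a i) (hb : ∀ j, 0 ≤ b j) (Ω : Fin m → Fin n → ℝ) :
    (∀ A B : Fin (m + 1) → Fin (n + 1) → ℝ, IsSemiCoupling a b A B →
      ∃ A' B' : Fin (m + 1) → Fin (n + 1) → ℝ,
        IsSemiCoupling a b A' B' ∧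
        (∀ i j, Ω i j ≤ 0 → A' i.succ j.succ = 0 ∧ B' i.succ j.succ = 0) ∧
        F Ω A B ≤ F Ω A' B') ∧
    sSup { s : ℝ | ∃ A B, IsSemiCoupling a b A B ∧ s = F Ω A B }
      = sSup { s : ℝ | ∃ A B, IsSemiCoupling a b A B ∧
          (∀ i j, Ω i j ≤ 0 → A i.succ j.succ = 0 ∧ B i.succ j.succ = 0) ∧
          s = F Ω A B } := by
  have hmain : ∀ A B : Fin (m + 1) → Fin (n + 1) → ℝ, IsSemiCoupling a b A B →
      ∃ A' B' : Fin (m + 1) → Fin (n + 1) → ℝ,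
        IsSemiCoupling a b A' B' ∧
        (∀ i j, Ω i j ≤ 0 → A' i.succ j.succ = 0 ∧ B' i.succ j.succ = 0) ∧
        F Ω A B ≤ F Ω A' B' := fun A B h =>
    ⟨modA Ω A, modB Ω B, mod_is_sc a b Ω A B h, mod_support Ω A B, mod_F_le Ω A B⟩
  refine ⟨hmain, ?_⟩
  set S := { s : ℝ | ∃ A B, IsSemiCoupling a b A B ∧ s = F Ω A B } with hS
  set T := { s : ℝ | ∃ A B, IsSemiCoupling a b A B ∧
      (∀ i j, Ω i j ≤ 0 → A i.succ j.succ = 0 ∧ B i.succ j.succ = 0) ∧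
      s = F Ω A B } with hT
  have hTS : T ⊆ S := fun s ⟨A, B, h1, _, h3⟩ => ⟨A, B, h1, h3⟩
  -- a trivial element of T
  have hTne : T.Nonempty := by
    refine ⟨0, fun i => Fin.cases (fun _ => (0:ℝ)) (fun i' j => if j = 0 then a i' else 0) i,
      fun i j => if i = 0 then Fin.cases (0:ℝ) b j else 0, ⟨?_, ?_, ?_, ?_, ?_, ?_⟩, ?_, ?_⟩
    · intro i j
      dsimp only
      induction i using Fin.cases with
      | zero => simp
      | succ i' => simp only [Fin.cases_succ]; split <;> [exact ha i'; exact le_refl 0]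
    · intro i j
      dsimp only
      split
      · induction j using Fin.cases with
        | zero => simp
        | succ j' => simpa using hb j'
      · exact le_refl 0
    · intro i
      rw [Fin.sum_univ_succ]
      simp [Fin.succ_ne_zero]
    · intro j; simp
    · intro j
      rw [Fin.sum_univ_succ]
      simp [Fin.succ_ne_zero]
    · intro i; dsimp only; split <;> simp
    · intro i j _
      constructor
      · simp [Fin.succ_ne_zero]
      · dsimp only; rw [if_neg (Fin.succ_ne_zero i)]
    · simp [F, Fin.succ_ne_zero]
  have hSne : S.Nonempty := hTne.mono hTS
  -- boundedness
  have hbdd : BddAbove S := by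
    refine ⟨∑ i : Fin m, ∑ j : Fin n, Real.sqrt (a i * b j) * |Ω i j|, ?_⟩
    rintro s ⟨A, B, ⟨hA0, hB0, hAm, hA00, hBm, hB00⟩, rfl⟩
    refine Finset.sum_le_sum fun i _ => Finset.sum_le_sum fun j _ => ?_
    have hAle : A i.succ j.succ ≤ a i := by
      rw [hAm i]
      exact Finset.single_le_sum (f := fun j' => A i.succ j') (fun k _ => hA0 _ _) (Finset.mem_univ j.succ)
    have hBle : B i.succ j.succ ≤ b j := by
      rw [hBm j]
      exact Finset.single_le_sum (f := fun i' => B i' j.succ) (fun k _ => hB0 _ _) (Finset.mem_univ i.succ)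
    calc Real.sqrt (A i.succ j.succ * B i.succ j.succ) * Ω i j
        ≤ Real.sqrt (A i.succ j.succ * B i.succ j.succ) * |Ω i j| :=
          mul_le_mul_of_nonneg_left (le_abs_self _) (Real.sqrt_nonneg _)
      _ ≤ Real.sqrt (a i * b j) * |Ω i j| := by
          refine mul_le_mul_of_nonneg_right ?_ (abs_nonneg _)
          exact Real.sqrt_le_sqrt (mul_le_mul hAle hBle (hB0 _ _) (ha i))
  have hbddT : BddAbove T := hbdd.mono hTS
  refine le_antisymm ?_ (csSup_le_csSup hbdd hTne hTS)
  refine csSup_le hSne ?_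
  rintro s ⟨A, B, hsc, rfl⟩
  obtain ⟨A', B', h1, h2, h3⟩ := hmain A B hsc
  exact le_trans h3 (le_csSup hbddT ⟨A', B', h1, h2, rfl⟩)
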